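/- arXiv:1307.2863 — 2 statements merged into one kernel-verified Lean document; each statement's English description precedes it below -/
import Mathlib

section
/- If every path in a finite simple graph G has at most k vertices (k ≥ 1), then td(G) ≤ k. -/
/-- A rooted forest on the vertex set `V`, represented via its ancestor relation:
`anc u v` means that `u` is a (weak) ancestor of `v`, i.e. `u` lies on the path
from `v` to the root of its component tree.  The ancestor relation of a rooted
forest is a partial order in which the set of ancestors of any vertex is a chain. -/
structure RootedForest (V : Type*) where
  anc : V → V → Prop
  refl : ∀ v, anc v v
  antisymm : ∀ u v, anc u v → anc v u → u = v
  trans : ∀ u v w, anc u v → anc v w → anc u w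
  upChain : ∀ u v w, anc u w → anc v w → anc u v ∨ anc v u

/-- The closure `clos(F)` of a rooted forest `F`: the simple graph with an edge `xy`
whenever `x` is a strict ancestor of `y` or vice versa. -/
def RootedForest.closure {V : Type*} (F : RootedForest V) : SimpleGraph V where
  Adj u v := u ≠ v ∧ (F.anc u v ∨ F.anc v u)
  symm := ⟨fun _ _ h => ⟨Ne.symm h.1, h.2.symm⟩⟩
  loopless := ⟨fun _ h => h.1 rfl⟩

/-- A rooted forest has height at most `t` iff every path from a root to a leaf has
at most `t` vertices; equivalently, every chain in the ancestor order has at most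
`t` elements. -/
def RootedForest.HeightLE {V : Type*} (F : RootedForest V) (t : ℕ) : Prop :=
  ∀ s : Finset V, (∀ u ∈ s, ∀ v ∈ s, F.anc u v ∨ F.anc v u) → s.card ≤ t

/-- The tree-depth of a graph `G` : the least `t` such that `G` is a subgraph of the
closure of some rooted forest on `V(G)` of height at most `t`. -/
noncomputable def treeDepth {V : Type*} (G : SimpleGraph V) : ℕ :=
  sInf { t | ∃ F : RootedForest V, F.HeightLE t ∧ G ≤ F.closure }

/-!
In a spanning forest of `G` (one whose parent–child pairs are edges of `G`) the ancestors of
any vertex form a path of `G`, so its height is at most `k`. A spanning forest of maximal total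
depth is normal, i.e. every edge `uv` of `G` joins comparable vertices, which is `G ≤ clos(F)`:
otherwise, if `depth v ≤ depth u`, re-hanging the subtree below `v` under `u` gives a spanning
forest in which every vertex below `v` is strictly deeper.
-/

namespace RootedForest

variable {V : Type*}

def ancestors (F : RootedForest V) (b : V) : Set V := {a | F.anc a b}

noncomputable def depth (F : RootedForest V) (b : V) : ℕ := (F.ancestors b).ncard

def IsParent (F : RootedForest V) (a b : V) : Prop :=
  F.anc a b ∧ a ≠ b ∧ ∀ c, F.anc a c → F.anc c b → c = a ∨ c = b

def IsSpanningForestOf (F : RootedForest V) (G : SimpleGraph V) : Prop :=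
  ∀ a b, F.IsParent a b → G.Adj a b

def discrete (V : Type*) : RootedForest V where
  anc := Eq
  refl := Eq.refl
  antisymm _ _ h _ := h
  trans _ _ _ := Eq.trans
  upChain _ _ _ h h' := .inl (h.trans h'.symm)

lemma discrete_isSpanningForestOf (G : SimpleGraph V) : (discrete V).IsSpanningForestOf G :=
  fun _ _ h => absurd h.1 h.2.1

variable {F : RootedForest V} {a b : V}

lemma mem_ancestors_self (b : V) : b ∈ F.ancestors b := F.refl b

lemma ancestors_subset_ancestors (h : F.anc a b) : F.ancestors a ⊆ F.ancestors b :=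
  fun _ hx => F.trans _ _ _ hx h

lemma ancestors_eq_insert_of_isParent (h : F.IsParent a b) :
    F.ancestors b = insert b (F.ancestors a) := by
  ext x
  refine ⟨fun hxb => or_iff_not_imp_left.2 fun hne => ?_, ?_⟩
  · rcases F.upChain x a b hxb h.1 with hxa | hax
    · exact hxa
    · rcases h.2.2 x hax hxb with rfl | rfl
      exacts [F.refl x, absurd rfl hne]
  · rintro (rfl | hxa)
    exacts [F.refl x, F.trans _ _ _ hxa h.1]

section Finite

variable [Finite V]

lemma depth_pos (b : V) : 0 < F.depth b :=
  (Set.ncard_pos (Set.toFinite _)).2 ⟨b, mem_ancestors_self b⟩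

lemma eq_of_anc_of_depth_le (h : F.anc a b) (hd : F.depth b ≤ F.depth a) : a = b := by
  have heq := Set.eq_of_subset_of_ncard_le (ancestors_subset_ancestors h) hd
  have hba : b ∈ F.ancestors a := heq ▸ mem_ancestors_self b
  exact F.antisymm a b h hba

lemma depth_lt_depth (h : F.anc a b) (hne : a ≠ b) : F.depth a < F.depth b :=
  (Set.ncard_le_ncard (ancestors_subset_ancestors h)).lt_of_not_ge
    fun hd => hne (eq_of_anc_of_depth_le h hd)

/-- The deepest strict ancestor of `b` is its parent. -/
lemma exists_isParent (h : ∃ a, F.anc a b ∧ a ≠ b) : ∃ a, F.IsParent a b := by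
  obtain ⟨a, ⟨hab, hne⟩, hmax⟩ :=
    Set.exists_max_image {a | F.anc a b ∧ a ≠ b} F.depth (Set.toFinite _) h
  refine ⟨a, hab, hne, fun c hac hcb => ?_⟩
  by_cases hcb' : c = b
  · exact .inr hcb'
  · exact .inl (eq_of_anc_of_depth_le hac (hmax c ⟨hcb, hcb'⟩)).symm

lemma exists_isPath_support_eq_ancestors {G : SimpleGraph V} (hF : F.IsSpanningForestOf G)
    (b : V) : ∃ (r : V) (p : G.Walk b r), p.IsPath ∧ {x | x ∈ p.support} = F.ancestors b := by
  induction hd : F.depth b using Nat.strong_induction_on generalizing b with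
  | _ n ih =>
  by_cases hroot : ∃ a, F.anc a b ∧ a ≠ b
  · obtain ⟨a, hpar⟩ := exists_isParent hroot
    obtain ⟨r, p, hp, hsupp⟩ := ih _ (hd ▸ depth_lt_depth hpar.1 hpar.2.1) a rfl
    have hb : b ∉ p.support := fun hb =>
      hpar.2.1 (F.antisymm a b hpar.1 (hsupp ▸ hb : b ∈ F.ancestors a))
    refine ⟨r, .cons (hF a b hpar).symm p, hp.cons hb, ?_⟩
    rw [ancestors_eq_insert_of_isParent hpar, ← hsupp]
    ext
    simp
  · push Not at hroot
    refine ⟨b, .nil, .nil, Set.ext fun x => ?_⟩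
    simp only [SimpleGraph.Walk.support_nil, List.mem_singleton, Set.mem_ofPred_eq, ancestors]
    exact ⟨fun h => h ▸ F.refl x, hroot x⟩

lemma depth_le_of_forall_isPath {G : SimpleGraph V} (hF : F.IsSpanningForestOf G) {k : ℕ}
    (h : ∀ (u v : V) (p : G.Walk u v), p.IsPath → p.length + 1 ≤ k) (b : V) :
    F.depth b ≤ k := by
  classical
  obtain ⟨r, p, hp, hsupp⟩ := exists_isPath_support_eq_ancestors hF b
  calc F.depth b = p.support.toFinset.card := by
        rw [depth, ← hsupp, ← Set.ncard_coe_finset, List.coe_toFinset]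
    _ = p.length + 1 := by rw [List.toFinset_card_of_nodup hp.support_nodup, p.length_support]
    _ ≤ k := h _ _ p hp

lemma IsSpanningForestOf.heightLE {G : SimpleGraph V} (hF : F.IsSpanningForestOf G) {k : ℕ}
    (h : ∀ (u v : V) (p : G.Walk u v), p.IsPath → p.length + 1 ≤ k) : F.HeightLE k := by
  intro s hs
  obtain rfl | hne := s.eq_empty_or_nonempty
  · simp
  obtain ⟨m, hm, hmax⟩ := s.exists_max_image F.depth hne
  have hsub : (s : Set V) ⊆ F.ancestors m := fun u hu => by
    rcases hs u hu m hm with hum | hmu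
    · exact hum
    · obtain rfl := eq_of_anc_of_depth_le hmu (hmax u hu)
      exact F.refl _
  calc s.card = (s : Set V).ncard := (Set.ncard_coe_finset s).symm
    _ ≤ F.depth m := Set.ncard_le_ncard hsub
    _ ≤ k := depth_le_of_forall_isPath hF h m

end Finite

/-- Cut off the subtree below `v` and attach it under `u`: a vertex below `v` keeps its
ancestors down to `v` and acquires those of `u`. -/
def rehang (F : RootedForest V) (u v : V) (hvu : ¬ F.anc v u) : RootedForest V where
  anc a b := F.anc a b ∧ (F.anc v a ∨ ¬ F.anc v b) ∨ F.anc v b ∧ F.anc a u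
  refl b := by
    have := F.refl
    grind
  antisymm a b := by
    have := F.antisymm; have := F.trans
    grind
  trans a b c := by
    have := F.trans
    grind
  upChain a b c := by
    have := F.trans; have := F.upChain
    grind

variable {u v : V} {hvu : ¬ F.anc v u}

lemma rehang_anc : (F.rehang u v hvu).anc a b ↔
    F.anc a b ∧ (F.anc v a ∨ ¬ F.anc v b) ∨ F.anc v b ∧ F.anc a u :=
  Iff.rfl

lemma IsSpanningForestOf.rehang {G : SimpleGraph V} (hF : F.IsSpanningForestOf G)
    (huv : G.Adj u v) : (F.rehang u v hvu).IsSpanningForestOf G := by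
  rintro a b ⟨hab, hne, hcov⟩
  have := F.refl; have := F.trans; have := F.antisymm
  simp only [rehang_anc] at hab hcov
  by_cases hcut : F.anc v b ∧ ¬ F.anc v a
  · have hv := hcov v; have hu := hcov u; have := huv.ne
    obtain ⟨rfl, rfl⟩ : a = u ∧ b = v := by grind
    exact huv
  · refine hF a b ⟨?_, hne, fun c hac hcb => hcov c ?_ ?_⟩ <;> grind

lemma depth_rehang_of_not_anc (hvb : ¬ F.anc v b) : (F.rehang u v hvu).depth b = F.depth b := by
  simp [depth, ancestors, rehang_anc, hvb]

lemma depth_lt_depth_rehang [Finite V] (hvb : F.anc v b) (hd : F.depth v ≤ F.depth u) :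
    F.depth b < (F.rehang u v hvu).depth b := by
  have := F.refl; have := F.trans; have := F.antisymm; have := F.upChain
  let segment : Set V := {a | F.anc v a ∧ F.anc a b}
  have hold : F.ancestors b = segment ∪ (F.ancestors v \ {v}) := by
    ext a
    simp only [ancestors, segment, Set.mem_union, Set.mem_sdiff, Set.mem_singleton_iff,
      Set.mem_ofPred_eq]
    grind
  have hnew : (F.rehang u v hvu).ancestors b = segment ∪ F.ancestors u := by
    ext a
    simp only [ancestors, rehang_anc, segment, Set.mem_union, Set.mem_ofPred_eq]
    grind
  have hdisj_old : Disjoint segment (F.ancestors v \ {v}) :=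
    Set.disjoint_left.2 fun a ha hav => hav.2 (F.antisymm a v hav.1 ha.1)
  have hdisj_new : Disjoint segment (F.ancestors u) :=
    Set.disjoint_left.2 fun a ha hau => hvu (F.trans v a u ha.1 hau)
  have hpos := depth_pos (F := F) v
  unfold depth at hd hpos ⊢
  rw [hold, hnew, Set.ncard_union_eq hdisj_old, Set.ncard_union_eq hdisj_new,
    Set.ncard_sdiff_singleton_of_mem (mem_ancestors_self v)]
  omega

noncomputable def totalDepth [Fintype V] (F : RootedForest V) : ℕ := ∑ b, F.depth b

lemma totalDepth_lt_totalDepth_rehang [Fintype V] (hd : F.depth v ≤ F.depth u) :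
    F.totalDepth < (F.rehang u v hvu).totalDepth := by
  refine Finset.sum_lt_sum (fun b _ => ?_)
    ⟨v, Finset.mem_univ v, depth_lt_depth_rehang (F.refl v) hd⟩
  by_cases hvb : F.anc v b
  · exact (depth_lt_depth_rehang hvb hd).le
  · exact (depth_rehang_of_not_anc hvb).ge

lemma totalDepth_le [Fintype V] (F : RootedForest V) :
    F.totalDepth ≤ Fintype.card V * Fintype.card V := by
  refine (Finset.sum_le_card_nsmul _ _ _ fun b _ => ?_).trans_eq (smul_eq_mul ..)
  exact (Set.ncard_le_card _).trans_eq Nat.card_eq_fintype_card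

lemma exists_isSpanningForestOf_le_closure [Fintype V] (G : SimpleGraph V) :
    ∃ F : RootedForest V, F.IsSpanningForestOf G ∧ G ≤ F.closure := by
  obtain ⟨F, hF, hmax⟩ : ∃ F : RootedForest V, F.IsSpanningForestOf G ∧
      ∀ F' : RootedForest V, F'.IsSpanningForestOf G → F'.totalDepth ≤ F.totalDepth := by
    have hbdd : BddAbove (totalDepth '' {F | F.IsSpanningForestOf G}) :=
      ⟨_, Set.forall_mem_image.2 fun F _ => F.totalDepth_le⟩
    obtain ⟨F, hF, hsup⟩ :=
      Nat.sSup_mem ⟨_, Set.mem_image_of_mem _ (discrete_isSpanningForestOf G)⟩ hbdd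
    exact ⟨F, hF, fun F' hF' => hsup ▸ le_csSup hbdd ⟨F', hF', rfl⟩⟩
  refine ⟨F, hF, fun u v huv => ⟨G.ne_of_adj huv, ?_⟩⟩
  by_contra hinc
  wlog hd : F.depth v ≤ F.depth u generalizing u v
  · exact this v u huv.symm (by tauto) (le_of_not_ge hd)
  have hvu : ¬ F.anc v u := fun h => hinc (.inr h)
  exact (hmax _ (hF.rehang (hvu := hvu) huv)).not_gt (totalDepth_lt_totalDepth_rehang hd)

end RootedForest

theorem treeDepth_le_of_paths_short_general {V : Type*} [Fintype V]
    (G : SimpleGraph V) (k : ℕ)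
    (h : ∀ (u v : V) (p : G.Walk u v), p.IsPath → p.length + 1 ≤ k) :
    treeDepth G ≤ k := by
  obtain ⟨F, hF, hGF⟩ := RootedForest.exists_isSpanningForestOf_le_closure G
  exact Nat.sInf_le ⟨F, hF.heightLE h, hGF⟩

/-- If every path in a finite simple graph `G` has at most `k` vertices (`k ≥ 1`),
then `td(G) ≤ k`. -/
theorem treeDepth_le_of_paths_short {V : Type*} [Fintype V]
    (G : SimpleGraph V) (k : ℕ) (hk : 1 ≤ k)
    (h : ∀ (u v : V) (p : G.Walk u v), p.IsPath → p.length + 1 ≤ k) :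
    treeDepth G ≤ k :=
  treeDepth_le_of_paths_short_general G k h
end

section
/- For every finite simple graph G with n ≥ 1 vertices, td(G) ≤ (tw(G) + 1) · ⌈log₂(n + 1)⌉, where tw(G) denotes the tree-width of G. -/
/-- A tree decomposition of `G`: a tree `T` whose nodes carry bags `B i ⊆ V(G)` such
that every vertex lies in some bag, every edge has both endpoints in a common bag,
and for each vertex the set of nodes whose bags contain it induces a connected
subtree of `T`. -/
def IsTreeDecomposition {V ι : Type*} (G : SimpleGraph V) (T : SimpleGraph ι)
    (B : ι → Finset V) : Prop :=
  T.IsTree ∧ (∀ v : V, ∃ i, v ∈ B i) ∧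
  (∀ u v : V, G.Adj u v → ∃ i, u ∈ B i ∧ v ∈ B i) ∧
  (∀ v : V, (T.induce {i | v ∈ B i}).Connected)

/-- The tree-width of `G`: the minimum, over all tree decompositions of `G`, of the
maximum bag size minus 1 (a decomposition has width at most `w` iff all its bags
have at most `w + 1` vertices). -/
noncomputable def treeWidth {V : Type*} (G : SimpleGraph V) : ℕ :=
  sInf { w | ∃ (n : ℕ) (T : SimpleGraph (Fin n)) (B : Fin n → Finset V),
    IsTreeDecomposition G T B ∧ ∀ i, (B i).card ≤ w + 1 }


/-! Every vertex set `C` of a graph with a tree decomposition into bags of at most `k` vertices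
has a separator of at most `k` vertices (the part of `C` in a suitable bag) leaving no component
of more than `|C| / 2` vertices of `C`. Removing such separators from all components in rounds
empties the graph after `⌈log₂ (n + 1)⌉` rounds. Order the vertices by the round of their
removal and let `u` be an ancestor of `v` when `v` is reachable from `u` through vertices not
before `u`; this is a rooted forest whose closure contains the graph, and a chain meets each
round in one component of that round, hence in at most `k` vertices. -/

open Finset

namespace SimpleGraph

variable {V : Type*}

def restrict (G : SimpleGraph V) (s : Set V) : SimpleGraph V where
  Adj u v := G.Adj u v ∧ u ∈ s ∧ v ∈ s
  symm := ⟨fun _ _ h => ⟨h.1.symm, h.2.2, h.2.1⟩⟩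

variable {G : SimpleGraph V} {s t : Set V} {u v : V}

@[simp]
lemma restrict_adj : (G.restrict s).Adj u v ↔ G.Adj u v ∧ u ∈ s ∧ v ∈ s := Iff.rfl

lemma restrict_mono (h : s ⊆ t) : G.restrict s ≤ G.restrict t :=
  fun _ _ hab => restrict_adj.2 ⟨hab.1, h hab.2.1, h hab.2.2⟩

lemma Reachable.restrict_of_induce {a b : s} (h : (G.induce s).Reachable a b) :
    (G.restrict s).Reachable a b :=
  h.map ⟨Subtype.val, fun hab => restrict_adj.2 ⟨hab, Subtype.prop _, Subtype.prop _⟩⟩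

lemma Reachable.restrict_of_forall_reachable_mem (h : (G.restrict s).Reachable u v)
    (ht : ∀ x ∈ s, (G.restrict s).Reachable u x → x ∈ t) : (G.restrict t).Reachable u v := by
  rw [reachable_iff_reflTransGen] at h
  induction h with
  | refl => rfl
  | @tail x y hux hxy ih =>
    have hux := (reachable_iff_reflTransGen _ _).2 hux
    have hy := ht y hxy.2.2 (hux.trans hxy.reachable)
    exact ih.trans (Adj.reachable <| restrict_adj.2 ⟨hxy.1, ht x hxy.2.1 hux, hy⟩)

open Classical in
noncomputable def componentIn (G : SimpleGraph V) (W : Finset V) (v : V) : Finset V :=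
  {u ∈ W | (G.restrict W).Reachable v u}

variable {W : Finset V}

lemma mem_componentIn : u ∈ G.componentIn W v ↔ u ∈ W ∧ (G.restrict W).Reachable v u := by
  simp [componentIn]

lemma self_mem_componentIn (hv : v ∈ W) : v ∈ G.componentIn W v :=
  mem_componentIn.2 ⟨hv, Reachable.refl v⟩

lemma componentIn_eq_of_reachable (h : (G.restrict W).Reachable u v) :
    G.componentIn W u = G.componentIn W v := by
  ext x
  simp only [mem_componentIn]
  exact and_congr_right fun _ => ⟨h.symm.trans, h.trans⟩

open Classical in
def HasBalancedSeparators (G : SimpleGraph V) (k : ℕ) : Prop :=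
  ∀ C : Finset V, ∃ S ⊆ C, #S ≤ k ∧ ∀ v ∈ C \ S, #(G.componentIn (C \ S) v) ≤ #C / 2

section Branch

variable {ι : Type*} {T : SimpleGraph ι} {i j t : ι}

def branch (T : SimpleGraph ι) (i j : ι) : Set ι :=
  {t | (T.restrict {i}ᶜ).Reachable j t}

lemma restrict_compl_le_deleteEdges {e : Sym2 ι} (hi : i ∈ e) :
    T.restrict {i}ᶜ ≤ T.deleteEdges {e} := by
  rintro a b ⟨hab, ha, hb⟩
  refine deleteEdges_adj.2 ⟨hab, fun he => ?_⟩
  rw [← Set.mem_singleton_iff.1 he, Sym2.mem_iff] at hi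
  rcases hi with rfl | rfl
  exacts [ha rfl, hb rfl]

lemma IsAcyclic.disjoint_branch (hT : T.IsAcyclic) (hij : T.Adj i j) :
    Disjoint (T.branch i j) (T.branch j i) := by
  refine Set.disjoint_left.2 fun t hj hi => isAcyclic_iff_forall_adj_isBridge.1 hT hij ?_
  exact (hi.mono (restrict_compl_le_deleteEdges (Sym2.mem_mk_right i j))).trans
    (hj.mono (restrict_compl_le_deleteEdges (Sym2.mem_mk_left i j))).symm

lemma Preconnected.exists_adj_mem_branch (hT : T.Preconnected) (ht : t ≠ i) :
    ∃ j, T.Adj i j ∧ t ∈ T.branch i j := by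
  obtain ⟨p⟩ := hT t i
  induction p with
  | nil => exact absurd rfl ht
  | @cons t u i htu p ih =>
    by_cases hu : u = i
    · subst hu
      exact ⟨t, htu.symm, Reachable.refl t⟩
    · obtain ⟨j, hij, hju⟩ := ih hu
      exact ⟨j, hij, hju.trans (Adj.reachable (restrict_adj.2 ⟨htu.symm, hu, ht⟩))⟩

/-- Pigeonhole on the edges of a finite tree, of which there are fewer than nodes. -/
lemma IsTree.exists_apply_apply_eq [Finite ι] (hT : T.IsTree) (f : ι → ι)
    (hf : ∀ i, T.Adj i (f i)) : ∃ i, f (f i) = i := by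
  classical
  have := Fintype.ofFinite ι
  have hcard : Fintype.card T.edgeSet < Fintype.card ι := by
    rw [← hT.card_edgeFinset, edgeFinset_card]
    exact Nat.lt_succ_self _
  obtain ⟨i, i', hne, heq⟩ :=
    Fintype.exists_ne_map_eq_of_card_lt (fun i => (⟨s(i, f i), hf i⟩ : T.edgeSet)) hcard
  rcases Sym2.eq_iff.1 (congrArg Subtype.val heq) with ⟨hii', -⟩ | ⟨hi, hfi⟩
  · exact absurd hii' hne
  · exact ⟨i, by rw [hfi, ← hi]⟩

end Branch

end SimpleGraph

namespace IsTreeDecomposition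

open SimpleGraph

variable {V ι : Type*} {G : SimpleGraph V} {T : SimpleGraph ι} {B : ι → Finset V} {i t t' : ι}
  {x y : V}

lemma mem_branch_of_mem_bags (hTB : IsTreeDecomposition G T B) (hxi : x ∉ B i) (ht : x ∈ B t)
    (ht' : x ∈ B t') : t' ∈ T.branch i t := by
  obtain ⟨-, -, -, hbags⟩ := hTB
  exact (Reachable.restrict_of_induce (s := {j | x ∈ B j}) (hbags x ⟨t, ht⟩ ⟨t', ht'⟩)).mono
    (restrict_mono fun _ hj hji => hxi (hji ▸ hj))

lemma mem_branch_of_reachable (hTB : IsTreeDecomposition G T B) (hxi : x ∉ B i)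
    (hxy : (G.restrict {v | v ∉ B i}).Reachable x y) (ht : x ∈ B t) (ht' : y ∈ B t') :
    t' ∈ T.branch i t := by
  rw [reachable_iff_reflTransGen] at hxy
  induction hxy generalizing t' with
  | refl => exact hTB.mem_branch_of_mem_bags hxi ht ht'
  | @tail a b _ hab ih =>
    obtain ⟨hab, -, hbi⟩ := restrict_adj.1 hab
    obtain ⟨s, has, hbs⟩ := hTB.2.2.1 a b hab
    exact (ih has).trans (hTB.mem_branch_of_mem_bags hbi hbs ht')

variable [Finite ι]

open Classical in
lemma exists_forall_adj_card_le (hTB : IsTreeDecomposition G T B) (C : Finset V) :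
    ∃ i, ∀ j, T.Adj i j → #{v ∈ C | ∀ t, v ∈ B t → t ∈ T.branch i j} ≤ #C / 2 := by
  obtain ⟨hT, hcover, -, -⟩ := hTB
  by_contra! hheavy
  choose f hf hfheavy using hheavy
  obtain ⟨i, hfi⟩ := hT.exists_apply_apply_eq f hf
  have hdisj : Disjoint {v ∈ C | ∀ t, v ∈ B t → t ∈ T.branch i (f i)}
      {v ∈ C | ∀ t, v ∈ B t → t ∈ T.branch (f i) i} := by
    refine disjoint_left.2 fun v hv hv' => ?_
    obtain ⟨t, ht⟩ := hcover v
    exact Set.disjoint_left.1 (hT.isAcyclic.disjoint_branch (hf i))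
      ((mem_filter.1 hv).2 t ht) ((mem_filter.1 hv').2 t ht)
  have hunion := (card_union_of_disjoint hdisj).symm.trans_le
    (card_le_card (union_subset (filter_subset _ C) (filter_subset _ C)))
  have h1 := hfheavy i
  have h2 := hfheavy (f i)
  rw [hfi] at h2
  omega

theorem hasBalancedSeparators {k : ℕ} (hTB : IsTreeDecomposition G T B)
    (hB : ∀ i, #(B i) ≤ k) : G.HasBalancedSeparators k := by
  classical
  intro C
  obtain ⟨i, hi⟩ := hTB.exists_forall_adj_card_le C
  refine ⟨C ∩ B i, inter_subset_left, (card_le_card inter_subset_right).trans (hB i),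
    fun v hv => ?_⟩
  obtain ⟨hvC, hvi⟩ : v ∈ C ∧ v ∉ B i := by simpa using hv
  obtain ⟨t, hvt⟩ := hTB.2.1 v
  obtain ⟨j, hij, htj⟩ :=
    hTB.1.connected.preconnected.exists_adj_mem_branch fun hti : t = i => hvi (hti ▸ hvt)
  refine (card_le_card fun u hu => ?_).trans (hi j hij)
  obtain ⟨huC, hvu⟩ := mem_componentIn.1 hu
  have hvu : (G.restrict {x | x ∉ B i}).Reachable v u :=
    hvu.mono (restrict_mono fun x hx => by simp_all)
  refine mem_filter.2 ⟨(mem_sdiff.1 huC).1, fun t' ht' => ?_⟩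
  exact htj.trans (hTB.mem_branch_of_reachable hvi hvu hvt ht')

end IsTreeDecomposition

lemma isTreeDecomposition_univ {V : Type*} [Fintype V] (G : SimpleGraph V) :
    IsTreeDecomposition G (⊥ : SimpleGraph (Fin 1)) fun _ => univ := by
  refine ⟨.of_subsingleton, fun v => ⟨0, mem_univ v⟩, fun u v _ => ⟨0, mem_univ u, mem_univ v⟩,
    fun v => ?_⟩
  have : Nonempty {i : Fin 1 | v ∈ (univ : Finset V)} := ⟨⟨0, mem_univ v⟩⟩
  exact .of_subsingleton

lemma exists_isTreeDecomposition_card_le_treeWidth_add_one {V : Type*} [Fintype V]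
    (G : SimpleGraph V) : ∃ (n : ℕ) (T : SimpleGraph (Fin n)) (B : Fin n → Finset V),
      IsTreeDecomposition G T B ∧ ∀ i, #(B i) ≤ treeWidth G + 1 := by
  have hne : {w | ∃ (n : ℕ) (T : SimpleGraph (Fin n)) (B : Fin n → Finset V),
      IsTreeDecomposition G T B ∧ ∀ i, #(B i) ≤ w + 1}.Nonempty :=
    ⟨Fintype.card V, 1, ⊥, _, isTreeDecomposition_univ G, fun _ => by simp⟩
  exact Nat.sInf_mem hne

namespace SimpleGraph

variable {V : Type*} {G : SimpleGraph V} {W : Finset V} {v : V} {k L : ℕ} {rank : V → ℕ}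

section RemoveSeparators

variable [DecidableEq V] {Sep : Finset V → Finset V}

noncomputable def removeSeparators (G : SimpleGraph V) (Sep : Finset V → Finset V)
    (W : Finset V) : Finset V :=
  {x ∈ W | x ∉ Sep (G.componentIn W x)}

lemma mem_removeSeparators :
    v ∈ G.removeSeparators Sep W ↔ v ∈ W ∧ v ∉ Sep (G.componentIn W v) :=
  mem_filter

lemma card_componentIn_removeSeparators_le
    (hSep : ∀ C, ∀ v ∈ C \ Sep C, #(G.componentIn (C \ Sep C) v) ≤ #C / 2)
    (hv : v ∈ G.removeSeparators Sep W) :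
    #(G.componentIn (G.removeSeparators Sep W) v) ≤ #(G.componentIn W v) / 2 := by
  set C := G.componentIn W v
  have hleft : ∀ x ∈ G.removeSeparators Sep W,
      (G.restrict (G.removeSeparators Sep W)).Reachable v x → x ∈ C \ Sep C := by
    intro x hx hvx
    obtain ⟨hxW, hxSep⟩ := mem_removeSeparators.1 hx
    have hvx : (G.restrict W).Reachable v x :=
      hvx.mono (restrict_mono (coe_subset.2 (filter_subset _ _)))
    rw [show C = G.componentIn W x from componentIn_eq_of_reachable hvx]
    exact mem_sdiff.2 ⟨self_mem_componentIn hxW, hxSep⟩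
  refine (card_le_card fun u hu => ?_).trans (hSep C v (hleft v hv (Reachable.refl v)))
  obtain ⟨huW, hvu⟩ := mem_componentIn.1 hu
  exact mem_componentIn.2 ⟨hleft u huW hvu, hvu.restrict_of_forall_reachable_mem hleft⟩

end RemoveSeparators

/-- `rank v` is the round of the recursive separation in which the vertex `v` of `W` is
removed. -/
def IsSeparationRanking (G : SimpleGraph V) (W : Finset V) (k L : ℕ) (rank : V → ℕ) : Prop :=
  (∀ v ∈ W, rank v < L) ∧
  ∀ ℓ (s : Finset V), (∀ u ∈ s, u ∈ W ∧ rank u = ℓ) →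
    (∀ u ∈ s, ∀ v ∈ s, (G.restrict {x | x ∈ W ∧ ℓ ≤ rank x}).Reachable u v) → #s ≤ k

lemma isSeparationRanking_empty (G : SimpleGraph V) (k L : ℕ) (rank : V → ℕ) :
    G.IsSeparationRanking ∅ k L rank := by
  refine ⟨by simp, fun ℓ s hs _ => ?_⟩
  simp [eq_empty_of_forall_notMem fun u hu => notMem_empty u (hs u hu).1]

lemma IsSeparationRanking.extend [DecidableEq V] {Sep : Finset V → Finset V}
    (hSep : ∀ C, #(Sep C) ≤ k) (h : G.IsSeparationRanking (G.removeSeparators Sep W) k L rank) :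
    G.IsSeparationRanking W k (L + 1)
      fun v => if v ∈ Sep (G.componentIn W v) then 0 else rank v + 1 := by
  refine ⟨fun v hv => ?_, fun ℓ s hs hconn => ?_⟩
  · dsimp only
    split_ifs with hS
    · exact Nat.succ_pos L
    · exact Nat.succ_lt_succ (h.1 v (mem_removeSeparators.2 ⟨hv, hS⟩))
  cases ℓ with
  | zero =>
    rcases s.eq_empty_or_nonempty with rfl | ⟨v₀, hv₀⟩
    · simp
    refine (card_le_card fun u hu => ?_).trans (hSep (G.componentIn W v₀))
    obtain ⟨-, hu0⟩ := hs u hu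
    have huSep : u ∈ Sep (G.componentIn W u) := by
      by_contra hu
      simp [hu] at hu0
    rwa [← componentIn_eq_of_reachable
      ((hconn v₀ hv₀ u hu).mono (restrict_mono fun x hx => hx.1))] at huSep
  | succ ℓ =>
    have hlater : {x | x ∈ W ∧ ℓ + 1 ≤ if x ∈ Sep (G.componentIn W x) then 0 else rank x + 1} =
        {x | x ∈ G.removeSeparators Sep W ∧ ℓ ≤ rank x} := by
      ext x
      by_cases hx : x ∈ Sep (G.componentIn W x) <;> simp [mem_removeSeparators, hx]
    refine h.2 ℓ s (fun u hu => ?_) (by simpa only [hlater] using hconn)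
    obtain ⟨huW, hu⟩ := hs u hu
    by_cases huS : u ∈ Sep (G.componentIn W u)
    · simp [huS] at hu
    · simp only [huS, if_false, Nat.add_right_cancel_iff] at hu
      exact ⟨mem_removeSeparators.2 ⟨huW, huS⟩, hu⟩

theorem HasBalancedSeparators.exists_isSeparationRanking (hG : G.HasBalancedSeparators k)
    (m : ℕ) (W : Finset V) (hW : ∀ v ∈ W, #(G.componentIn W v) ≤ m) :
    ∃ rank, G.IsSeparationRanking W k (Nat.clog 2 (m + 1)) rank := by
  classical
  choose Sep _ hSepCard hSepBal using hG
  induction m using Nat.strong_induction_on generalizing W with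
  | _ m ih =>
  rcases W.eq_empty_or_nonempty with rfl | ⟨v, hv⟩
  · exact ⟨0, isSeparationRanking_empty G k _ 0⟩
  have hm : 1 ≤ m := (card_pos.2 ⟨v, self_mem_componentIn hv⟩).trans_le (hW v hv)
  obtain ⟨rank, hrank⟩ := ih (m / 2) (by omega) (G.removeSeparators Sep W) fun v hv =>
    (card_componentIn_removeSeparators_le hSepBal hv).trans
      (Nat.div_le_div_right (hW v (mem_removeSeparators.1 hv).1))
  have hL : Nat.clog 2 (m + 1) = Nat.clog 2 (m / 2 + 1) + 1 := by
    rw [Nat.clog_of_two_le (by norm_num) (by omega)]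
    congr 2
    omega
  exact ⟨_, hL ▸ hrank.extend hSepCard⟩

section EliminationForest

variable {α : Type*} [LinearOrder α]

def eliminationForest (G : SimpleGraph V) (h : V → α) (hh : Function.Injective h) :
    RootedForest V where
  anc u v := h u ≤ h v ∧ (G.restrict {x | h u ≤ h x}).Reachable u v
  refl v := ⟨le_rfl, Reachable.refl v⟩
  antisymm _ _ huv hvu := hh (le_antisymm huv.1 hvu.1)
  trans _ _ _ huv hvw :=
    ⟨huv.1.trans hvw.1, huv.2.trans (hvw.2.mono (restrict_mono fun _ hx => huv.1.trans hx))⟩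
  upChain u v _ huw hvw := by
    rcases le_total (h u) (h v) with huv | hvu
    · exact Or.inl ⟨huv, huw.2.trans (hvw.2.mono (restrict_mono fun _ hx => huv.trans hx)).symm⟩
    · exact Or.inr ⟨hvu, hvw.2.trans (huw.2.mono (restrict_mono fun _ hx => hvu.trans hx)).symm⟩

variable {h : V → α} (hh : Function.Injective h) {u : V}

lemma le_closure_eliminationForest : G ≤ (G.eliminationForest h hh).closure := by
  intro u v huv
  refine ⟨huv.ne, ?_⟩
  rcases le_total (h u) (h v) with hle | hle
  · exact Or.inl ⟨hle, Adj.reachable (restrict_adj.2 ⟨huv, le_rfl, hle⟩)⟩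
  · exact Or.inr ⟨hle, Adj.reachable (restrict_adj.2 ⟨huv.symm, le_rfl, hle⟩)⟩

lemma reachable_of_anc_eliminationForest (hrank : ∀ x y, rank x < rank y → h x < h y)
    (huv : (G.eliminationForest h hh).anc u v) :
    (G.restrict {x | rank u ≤ rank x}).Reachable u v :=
  huv.2.mono (restrict_mono fun x hx => not_lt.1 fun hlt => (hrank x u hlt).not_ge hx)

theorem heightLE_eliminationForest [Fintype V] (hrank : ∀ x y, rank x < rank y → h x < h y)
    (hr : G.IsSeparationRanking univ k L rank) :
    (G.eliminationForest h hh).HeightLE (k * L) := by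
  classical
  intro s hs
  have hfiber : ∀ ℓ, #{u ∈ s | rank u = ℓ} ≤ k := by
    intro ℓ
    refine hr.2 ℓ _ (fun u hu => ⟨mem_univ u, (mem_filter.1 hu).2⟩) fun u hu v hv => ?_
    obtain ⟨hus, rfl⟩ := mem_filter.1 hu
    obtain ⟨hvs, hvu⟩ := mem_filter.1 hv
    have hcone : {x | rank u ≤ rank x} ⊆ {x | x ∈ (univ : Finset V) ∧ rank u ≤ rank x} :=
      fun x hx => ⟨mem_univ x, hx⟩
    rcases hs u hus v hvs with huv | hvu'
    · exact (reachable_of_anc_eliminationForest hh hrank huv).mono (restrict_mono hcone)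
    · exact ((reachable_of_anc_eliminationForest hh hrank hvu').mono
        (restrict_mono (hvu ▸ hcone))).symm
  simpa using card_le_mul_card_image_of_maps_to (t := range L)
    (fun v _ => mem_range.2 (hr.1 v (mem_univ v))) k fun ℓ _ => hfiber ℓ

end EliminationForest

end SimpleGraph

theorem treeDepth_le_treeWidth_mul_log_general {V : Type*} [Fintype V]
    (G : SimpleGraph V) :
    treeDepth G ≤ (treeWidth G + 1) * Nat.clog 2 (Fintype.card V + 1) := by
  obtain ⟨n, T, B, hTB, hB⟩ := exists_isTreeDecomposition_card_le_treeWidth_add_one G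
  obtain ⟨rank, hrank⟩ := (hTB.hasBalancedSeparators hB).exists_isSeparationRanking _ univ
    fun v _ => card_le_univ _
  let e := Fintype.equivFin V
  have hinj : Function.Injective fun v => toLex (rank v, e v) :=
    fun u v huv => e.injective (congrArg Prod.snd (toLex.injective huv))
  have hmono : ∀ x y, rank x < rank y → toLex (rank x, e x) < toLex (rank y, e y) :=
    fun x y hxy => Prod.Lex.toLex_lt_toLex.2 (Or.inl hxy)
  exact Nat.sInf_le ⟨_, G.heightLE_eliminationForest hinj hmono hrank,
    G.le_closure_eliminationForest hinj⟩

/-- For every finite simple graph `G` with `n ≥ 1` vertices,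
`td(G) ≤ (tw(G) + 1) · ⌈log₂ (n + 1)⌉`. -/
theorem treeDepth_le_treeWidth_mul_log {V : Type*} [Fintype V] [Nonempty V]
    (G : SimpleGraph V) :
    treeDepth G ≤ (treeWidth G + 1) * Nat.clog 2 (Fintype.card V + 1) :=
  treeDepth_le_treeWidth_mul_log_general G
end
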